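/- arXiv:1112.5396 — 5 statements merged into one kernel-verified Lean document; each statement's English description precedes it below -/
import Mathlib

section
/- Let C > 0 and let X_1, …, X_n be independent random variables with X_i ∈ [0, C] almost surely. Let μ = E[Σ_i X_i]. Then E[min(Σ_i X_i, C)] ≥ (1 - e^{-μ/C})·C. -/
/-!
Write `S = ∑ Xᵢ`. Pointwise, `min(S, C) ≥ C (1 - ∏ (1 - Xᵢ / C))`: the right side is at most `C`
because every factor lies in `[0, 1]`, and at most `S` by the Weierstrass product inequality
`∏ (1 - tᵢ) ≥ 1 - ∑ tᵢ`. By independence the expectation of the product is `∏ (1 - E Xᵢ / C)`,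
and `1 - t ≤ e^{-t}` bounds this by `e^{-E S / C}`.
-/

open MeasureTheory ProbabilityTheory Finset
open Set (Icc)

section Inequalities

variable {ι : Type*}

theorem Finset.one_sub_sum_le_prod_one_sub {R : Type*} [CommRing R] [LinearOrder R]
    [IsStrictOrderedRing R] (s : Finset ι) {t : ι → R} (ht₀ : ∀ i ∈ s, 0 ≤ t i)
    (ht₁ : ∀ i ∈ s, t i ≤ 1) :
    1 - ∑ i ∈ s, t i ≤ ∏ i ∈ s, (1 - t i) := by
  classical
  induction s using Finset.induction_on with
  | empty => simp
  | insert a s ha ih =>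
    have hsum₀ : 0 ≤ ∑ i ∈ s, t i := sum_nonneg fun i hi => ht₀ i (mem_insert_of_mem hi)
    have ih' := ih (fun i hi => ht₀ i (mem_insert_of_mem hi))
      (fun i hi => ht₁ i (mem_insert_of_mem hi))
    rw [prod_insert ha, sum_insert ha]
    linarith [mul_le_mul_of_nonneg_left ih' (sub_nonneg.2 (ht₁ a (mem_insert_self a s))),
      mul_nonneg (ht₀ a (mem_insert_self a s)) hsum₀]

theorem Real.prod_one_sub_le_exp_neg_sum (s : Finset ι) {t : ι → ℝ} (ht : ∀ i ∈ s, t i ≤ 1) :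
    ∏ i ∈ s, (1 - t i) ≤ Real.exp (-∑ i ∈ s, t i) := by
  rw [← sum_neg_distrib, Real.exp_sum]
  exact prod_le_prod (fun i hi => sub_nonneg.2 (ht i hi)) fun i _ => Real.one_sub_le_exp_neg _

variable {s : Finset ι} {x : ι → ℝ} {C : ℝ}

theorem prod_one_sub_div_mem_Icc (hC : 0 < C) (hx : ∀ i ∈ s, x i ∈ Icc 0 C) :
    ∏ i ∈ s, (1 - x i / C) ∈ Icc (0 : ℝ) 1 := by
  have hdiv : ∀ i ∈ s, x i / C ∈ Icc (0 : ℝ) 1 := fun i hi =>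
    ⟨div_nonneg (hx i hi).1 hC.le, (div_le_one hC).2 (hx i hi).2⟩
  exact ⟨prod_nonneg fun i hi => sub_nonneg.2 (hdiv i hi).2,
    prod_le_one (fun i hi => sub_nonneg.2 (hdiv i hi).2)
      fun i hi => sub_le_self _ (hdiv i hi).1⟩

theorem sub_mul_prod_one_sub_div_le_min_sum (hC : 0 < C) (hx : ∀ i ∈ s, x i ∈ Icc 0 C) :
    C - C * ∏ i ∈ s, (1 - x i / C) ≤ min (∑ i ∈ s, x i) C := by
  have hweierstrass := s.one_sub_sum_le_prod_one_sub (t := fun i => x i / C)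
    (fun i hi => div_nonneg (hx i hi).1 hC.le) fun i hi => (div_le_one hC).2 (hx i hi).2
  rw [← sum_div] at hweierstrass
  refine le_min ?_ (sub_le_self _ (mul_nonneg hC.le (prod_one_sub_div_mem_Icc hC hx).1))
  calc C - C * ∏ i ∈ s, (1 - x i / C) ≤ C - C * (1 - (∑ i ∈ s, x i) / C) := by gcongr
    _ = ∑ i ∈ s, x i := by field_simp; ring

end Inequalities

section Independence

variable {Ω ι : Type*} [MeasurableSpace Ω] {μ : Measure Ω} [IsProbabilityMeasure μ] [Fintype ι]
  {X : ι → Ω → ℝ}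

theorem ProbabilityTheory.iIndepFun.integral_prod_one_sub_div (hX : iIndepFun X μ)
    (hint : ∀ i, Integrable (X i) μ) (C : ℝ) :
    ∫ ω, ∏ i, (1 - X i ω / C) ∂μ = ∏ i, (1 - (∫ ω, X i ω ∂μ) / C) := by
  rw [hX.integral_fun_prod_comp (f := fun _ x => 1 - x / C) (fun i => (hint i).aemeasurable)
    fun _ => (by fun_prop : Continuous fun x : ℝ => 1 - x / C).aestronglyMeasurable]
  refine prod_congr rfl fun i _ => ?_
  rw [integral_sub (integrable_const 1) ((hint i).div_const C), integral_div]
  simp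

end Independence

theorem stmt_3 {Ω : Type*} [MeasurableSpace Ω] (μ : Measure Ω) [IsProbabilityMeasure μ]
    (C : ℝ) (hC : 0 < C) (n : ℕ) (X : Fin n → Ω → ℝ)
    (hindep : iIndepFun X μ)
    (h0 : ∀ i, ∀ᵐ ω ∂μ, 0 ≤ X i ω) (hCle : ∀ i, ∀ᵐ ω ∂μ, X i ω ≤ C)
    (hint : ∀ i, Integrable (X i) μ) :
    (∫ ω, min (∑ i, X i ω) C ∂μ) ≥
      (1 - Real.exp (-(∫ ω, ∑ i, X i ω ∂μ) / C)) * C := by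
  have hIcc : ∀ᵐ ω ∂μ, ∀ i ∈ univ, X i ω ∈ Icc 0 C := by
    filter_upwards [ae_all_iff.2 h0, ae_all_iff.2 hCle] with ω h0ω hCω i _ using ⟨h0ω i, hCω i⟩
  have hprod_int : Integrable (fun ω => ∏ i, (1 - X i ω / C)) μ := by
    refine .of_bound (by fun_prop (disch := exact fun i => (hint i).1)) 1 ?_
    filter_upwards [hIcc] with ω hω
    rw [Real.norm_of_nonneg (prod_one_sub_div_mem_Icc hC hω).1]
    exact (prod_one_sub_div_mem_Icc hC hω).2
  have hmean : (∫ ω, ∑ i, X i ω ∂μ) / C = ∑ i, (∫ ω, X i ω ∂μ) / C := by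
    rw [integral_finsetSum _ fun i _ => hint i, sum_div]
  have hmean_le : ∀ i ∈ univ, (∫ ω, X i ω ∂μ) / C ≤ 1 := fun i _ =>
    (div_le_one hC).2 (by simpa using integral_mono_ae (hint i) (integrable_const C) (hCle i))
  calc (1 - Real.exp (-(∫ ω, ∑ i, X i ω ∂μ) / C)) * C
      ≤ C - C * ∏ i, (1 - (∫ ω, X i ω ∂μ) / C) := by
        rw [neg_div, hmean]
        nlinarith [Real.prod_one_sub_le_exp_neg_sum univ hmean_le]
    _ = ∫ ω, (C - C * ∏ i, (1 - X i ω / C)) ∂μ := by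
        rw [integral_sub (integrable_const C) (hprod_int.const_mul C), integral_const_mul,
          hindep.integral_prod_one_sub_div hint]
        simp
    _ ≤ ∫ ω, min (∑ i, X i ω) C ∂μ :=
        integral_mono_ae ((integrable_const C).sub (hprod_int.const_mul C))
          ((integrable_finsetSum _ fun i _ => hint i).inf (integrable_const C))
          (hIcc.mono fun ω hω => sub_mul_prod_one_sub_div_le_min_sum hC hω)
end

section
/- Consider the dynamic-programming values defined by E_{u+1}^r = 0, E_t^0 = 0, and E_t^r = p_t · max(v_t + E_{t+1}^{r-1}, E_{t+1}^r) + (1 - p_t)·E_{t+1}^r for t ∈ [1,u], r ∈ [1,C], where p_t ∈ [0,1] and v_t ≥ 0. Then for all t and all r ≥ 1: E_t^r ≥ (r/(r+1))·E_t^{r+1}. -/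
theorem stmt_8 (u : ℕ) (hu : 1 ≤ u) (p v : ℕ → ℝ)
    (hp : ∀ t, 0 ≤ p t ∧ p t ≤ 1) (hv : ∀ t, 0 ≤ v t)
    (E : ℕ → ℕ → ℝ)
    (hEu : ∀ r, E (u + 1) r = 0)
    (hE0 : ∀ t, E t 0 = 0)
    (hErec : ∀ t r, 1 ≤ t → t ≤ u → 1 ≤ r →
      E t r = p t * max (v t + E (t + 1) (r - 1)) (E (t + 1) r)
        + (1 - p t) * E (t + 1) r) :
    ∀ t r, 1 ≤ t → t ≤ u → 1 ≤ r →
      E t r ≥ ((r : ℝ) / (r + 1)) * E t (r + 1) := by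
  have key : ∀ k t r, 1 ≤ t → t ≤ u → u - t ≤ k → 1 ≤ r →
      E t r ≥ ((r : ℝ) / (r + 1)) * E t (r + 1) := by
    intro k
    induction k with
    | zero =>
      intro t r ht1 htu hk hr
      have htu' : t = u := by omega
      subst htu'
      have hEur : E t r = p t * v t := by
        rw [hErec t r ht1 le_rfl hr]
        simp only [hEu, add_zero, mul_zero]
        rw [max_eq_left (hv t)]
      have hEur1 : E t (r+1) = p t * v t := by
        rw [hErec t (r+1) ht1 le_rfl (by omega)]
        simp only [hEu, add_zero, mul_zero]
        rw [max_eq_left (hv t)]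
      rw [hEur, hEur1]
      have hpv : 0 ≤ p t * v t := mul_nonneg (hp t).1 (hv t)
      have hR : (0:ℝ) ≤ (r:ℝ) := Nat.cast_nonneg r
      have hle1 : (r:ℝ)/((r:ℝ)+1) ≤ 1 := by
        rw [div_le_one (by positivity)]; linarith
      nlinarith
    | succ k ih =>
      intro t r ht1 htu hk hr
      by_cases hcase : u - t ≤ k
      · exact ih t r ht1 htu hcase hr
      have htlt : t < u := by omega
      set R : ℝ := (r : ℝ) with hRdef
      have hR1 : (1:ℝ) ≤ R := by rw [hRdef]; exact_mod_cast hr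
      have hRpos : (0:ℝ) < R + 1 := by linarith
      have ht1u : t + 1 ≤ u := htlt
      have hk' : u - (t+1) ≤ k := by omega
      set a := E (t+1) (r-1) with ha
      set b := E (t+1) r with hb
      set c := E (t+1) (r+1) with hc
      have hbc : b ≥ R / (R+1) * c := ih (t+1) r (by omega) ht1u hk' hr
      have hab : R * a ≥ (R - 1) * b := by
        rcases Nat.lt_or_ge r 2 with h2 | h2
        · have hr1 : r = 1 := by omega
          have ha0 : a = 0 := by rw [ha, hr1]; exact hE0 _
          have hRe : R = 1 := by rw [hRdef, hr1]; norm_num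
          rw [ha0, hRe]; simp
        · have hih := ih (t+1) (r-1) (by omega) ht1u hk' (by omega)
          have hcast : ((r-1 : ℕ) : ℝ) = R - 1 := by
            rw [hRdef]
            push_cast [Nat.cast_sub (by omega : 1 ≤ r)]
            ring
          have hsucc : r - 1 + 1 = r := by omega
          rw [hsucc, hcast] at hih
          have hRm1 : (0:ℝ) < (R-1) + 1 := by linarith
          rw [ge_iff_le, div_mul_eq_mul_div, div_le_iff₀ hRm1] at hih
          nlinarith
      have hrec1 := hErec t r ht1 (le_of_lt htlt) hr
      have hrec2 := hErec t (r+1) ht1 (le_of_lt htlt) (by omega)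
      have hsub : r + 1 - 1 = r := by omega
      rw [hsub] at hrec2
      rw [hrec1, hrec2]
      set M1 := max (v t + a) b with hM1
      set M2 := max (v t + b) c with hM2
      have hM1a : v t + a ≤ M1 := le_max_left _ _
      have hM1b : b ≤ M1 := le_max_right _ _
      have hM1M2 : M1 ≥ R/(R+1) * M2 := by
        rcases max_cases (v t + b) c with ⟨h, _⟩ | ⟨h, _⟩ <;> rw [hM2, h]
        · rw [ge_iff_le, div_mul_eq_mul_div, div_le_iff₀ hRpos]
          have hmul := mul_le_mul_of_nonneg_left hM1a (by linarith : (0:ℝ) ≤ R)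
          nlinarith [hv t]
        · rw [ge_iff_le, div_mul_eq_mul_div, div_le_iff₀ hRpos]
          rw [ge_iff_le, div_mul_eq_mul_div, div_le_iff₀ hRpos] at hbc
          nlinarith [mul_le_mul_of_nonneg_right hM1b (le_of_lt hRpos)]
      have hp0 := (hp t).1
      have hp1 := (hp t).2
      rw [ge_iff_le, div_mul_eq_mul_div, div_le_iff₀ hRpos] at hbc hM1M2 ⊢
      nlinarith [mul_le_mul_of_nonneg_left hM1M2 hp0,
        mul_le_mul_of_nonneg_left hbc (by linarith : (0:ℝ) ≤ 1 - p t)]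
  intro t r ht1 htu hr
  exact key (u - t) t r ht1 htu le_rfl hr
end

section
/- With the dynamic program E_t^r as above (E_{u+1}^r = 0, E_t^0 = 0, E_t^r = p_t·max(v_t + E_{t+1}^{r-1}, E_{t+1}^r) + (1-p_t)·E_{t+1}^r), the inequality E_t^r ≥ max(p_t·v_t + (1 - p_t/r)·E_{t+1}^r, E_{t+1}^r) holds for all t ∈ [1,u] and r ∈ [1,C]. -/
/-!
The dynamic program preserves concavity in the capacity `r`: if `r ↦ E (t+1) r` is concave with
`E (t+1) 0 = 0`, so is `r ↦ E t r`, since `max (w + a (r-1)) (a r)` is concave whenever `a` is.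
A concave sequence vanishing at `0` has nonincreasing averages `a r / r`, which is the
marginal-decrease property `r * a (r-1) ≥ (r-1) * a r`; plugging it into the left branch of
the max in the recursion gives the bound.
-/

def IsConcaveSeq (a : ℕ → ℝ) : Prop :=
  ∀ r, a (r + 2) + a r ≤ 2 * a (r + 1)

lemma max_add_max_le_two_mul_max (w a₀ a₁ a₂ a₃ : ℝ) (h₁ : a₂ + a₀ ≤ 2 * a₁)
    (h₂ : a₃ + a₁ ≤ 2 * a₂) :
    max (w + a₂) a₃ + max (w + a₀) a₁ ≤ 2 * max (w + a₁) a₂ := by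
  rcases max_cases (w + a₂) a₃ with ⟨e₁, _⟩ | ⟨e₁, _⟩ <;>
    rcases max_cases (w + a₀) a₁ with ⟨e₂, _⟩ | ⟨e₂, _⟩ <;>
      rw [e₁, e₂] <;>
        linarith [le_max_left (w + a₁) a₂, le_max_right (w + a₁) a₂]

lemma IsConcaveSeq.bellman {a b : ℕ → ℝ} (ha : IsConcaveSeq a) (ha₀ : a 0 = 0) {p w : ℝ}
    (hp₀ : 0 ≤ p) (hp₁ : p ≤ 1) (hb₀ : b 0 = 0)
    (hb : ∀ r, b (r + 1) = p * max (w + a r) (a (r + 1)) + (1 - p) * a (r + 1)) :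
    IsConcaveSeq b := by
  intro r
  cases r with
  | zero =>
    have h₂ : a 2 ≤ 2 * a 1 := by simpa [ha₀] using ha 0
    have hmax : max (w + a 1) (a 2) ≤ 2 * max (w + a 0) (a 1) := by
      rw [ha₀, add_zero]
      apply max_le <;> linarith [le_max_left w (a 1), le_max_right w (a 1)]
    rw [hb 1, hb 0, hb₀]
    nlinarith [mul_le_mul_of_nonneg_left hmax hp₀,
      mul_le_mul_of_nonneg_left h₂ (sub_nonneg.2 hp₁)]
  | succ s =>
    have hmax := max_add_max_le_two_mul_max w (a s) (a (s + 1)) (a (s + 2)) (a (s + 3))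
      (ha s) (ha (s + 1))
    rw [hb (s + 2), hb (s + 1), hb s]
    nlinarith [mul_le_mul_of_nonneg_left hmax hp₀, mul_le_mul_of_nonneg_left
      (ha (s + 1)) (sub_nonneg.2 hp₁)]

lemma IsConcaveSeq.nat_mul_apply_succ_le {a : ℕ → ℝ} (ha : IsConcaveSeq a) (ha₀ : a 0 = 0)
    (s : ℕ) : (s : ℝ) * a (s + 1) ≤ (s + 1) * a s := by
  induction s with
  | zero => simp [ha₀]
  | succ s ih =>
    push_cast
    nlinarith [mul_le_mul_of_nonneg_left (ha s) (by positivity : (0 : ℝ) ≤ s + 1)]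

lemma bellman_ge_of_nat_mul_le {x y p w : ℝ} {s : ℕ} (hp₀ : 0 ≤ p)
    (hxy : s * y ≤ (s + 1) * x) :
    max (p * w + (1 - p / ((s + 1 : ℕ) : ℝ)) * y) y ≤
      p * max (w + x) y + (1 - p) * y := by
  have hs : (0 : ℝ) < s + 1 := by positivity
  have hx : s / (s + 1) * y ≤ x := by
    rw [div_mul_eq_mul_div, div_le_iff₀ hs]
    linarith
  push_cast
  apply max_le
  · calc p * w + (1 - p / (s + 1)) * y = p * (w + s / (s + 1) * y) + (1 - p) * y := by
          field_simp
          ring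
      _ ≤ p * max (w + x) y + (1 - p) * y := by
          gcongr
          exact le_max_of_le_left (by linarith)
  · nlinarith [le_max_right (w + x) y]

theorem stmt_9_general (u : ℕ) (p v : ℕ → ℝ)
    (hp : ∀ t, 0 ≤ p t ∧ p t ≤ 1)
    (E : ℕ → ℕ → ℝ)
    (hEu : ∀ r, E (u + 1) r = 0)
    (hE0 : ∀ t, E t 0 = 0)
    (hErec : ∀ t r, 1 ≤ t → t ≤ u → 1 ≤ r →
      E t r = p t * max (v t + E (t + 1) (r - 1)) (E (t + 1) r)
        + (1 - p t) * E (t + 1) r) :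
    ∀ t r, 1 ≤ t → t ≤ u → 1 ≤ r →
      E t r ≥ max (p t * v t + (1 - p t / (r : ℝ)) * E (t + 1) r) (E (t + 1) r) := by
  have hconcave : ∀ t, 1 ≤ t → t ≤ u + 1 → IsConcaveSeq (E t) := by
    intro t ht htu
    refine Nat.decreasingInduction' (fun k _ htk ih => ?_) htu ?_
    · exact ih.bellman (hE0 _) (hp k).1 (hp k).2 (hE0 k)
        fun r => hErec k (r + 1) (by omega) (by omega) (by omega)
    · intro r
      simp [hEu]
  intro t r ht htu hr
  obtain ⟨s, rfl⟩ := Nat.exists_eq_add_of_le' hr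
  rw [hErec t (s + 1) ht htu hr, Nat.add_sub_cancel]
  exact bellman_ge_of_nat_mul_le (hp t).1
    ((hconcave (t + 1) (by omega) (by omega)).nat_mul_apply_succ_le (hE0 _) s)

theorem stmt_9 (u : ℕ) (hu : 1 ≤ u) (p v : ℕ → ℝ)
    (hp : ∀ t, 0 ≤ p t ∧ p t ≤ 1) (hv : ∀ t, 0 ≤ v t)
    (E : ℕ → ℕ → ℝ)
    (hEu : ∀ r, E (u + 1) r = 0)
    (hE0 : ∀ t, E t 0 = 0)
    (hErec : ∀ t r, 1 ≤ t → t ≤ u → 1 ≤ r →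
      E t r = p t * max (v t + E (t + 1) (r - 1)) (E (t + 1) r)
        + (1 - p t) * E (t + 1) r) :
    ∀ t r, 1 ≤ t → t ≤ u → 1 ≤ r →
      E t r ≥ max (p t * v t + (1 - p t / (r : ℝ)) * E (t + 1) r) (E (t + 1) r) :=
  stmt_9_general u p v hp E hEu hE0 hErec
end

section
/- Let u, C be positive integers, p_1,…,p_u ∈ [0,1] with Σ_t p_t ≤ C, and v_1,…,v_u ≥ 0. Define F_{u+1} = 0 and F_t = max(p_t·v_t + (1 - p_t/C)·F_{t+1}, F_{t+1}) for t = u, u-1, …, 1. Then F_1 ≥ (1/2)·Σ_{t=1}^u p_t·v_t. -/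
theorem stmt_10 (u C : ℕ) (hu : 1 ≤ u) (hC : 1 ≤ C) (p v : ℕ → ℝ)
    (hp : ∀ t, 0 ≤ p t ∧ p t ≤ 1) (hv : ∀ t, 0 ≤ v t)
    (hsum : ∑ t ∈ Finset.Icc 1 u, p t ≤ (C : ℝ))
    (F : ℕ → ℝ) (hFu : F (u + 1) = 0)
    (hFrec : ∀ t, 1 ≤ t → t ≤ u →
      F t = max (p t * v t + (1 - p t / (C : ℝ)) * F (t + 1)) (F (t + 1))) :
    F 1 ≥ (1 / 2) * ∑ t ∈ Finset.Icc 1 u, p t * v t := by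
  have hC0 : (0:ℝ) < C := by exact_mod_cast hC
  have step : ∀ t, 1 ≤ t → t ≤ u → F (t+1) ≤ F t := by
    intro t h1 h2; rw [hFrec t h1 h2]; exact le_max_right _ _
  have hmono : ∀ s, 1 ≤ s → s ≤ u + 1 → F s ≤ F 1 := by
    intro s
    induction s with
    | zero => omega
    | succ n ih =>
      intro h1 h2
      rcases Nat.lt_or_ge 1 (n+1) with h | h
      · have hn1 : 1 ≤ n := by omega
        have hnu : n ≤ u := by omega
        exact le_trans (step n hn1 hnu) (ih hn1 (by omega))
      · have : n = 0 := by omega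
        simp [this]
  have hF1 : 0 ≤ F 1 := by
    have := hmono (u+1) (by omega) le_rfl
    rw [hFu] at this; exact this
  have key : ∀ n, n ≤ u → ∑ t ∈ Finset.Icc 1 n, p t * v t
      ≤ F 1 - F (n+1) + (∑ t ∈ Finset.Icc 1 n, p t / C) * F 1 := by
    intro n
    induction n with
    | zero => simp
    | succ m ih =>
      intro hn
      have hm := ih (by omega)
      have hrec := hFrec (m+1) (by omega) hn
      have hle : F (m+2) ≤ F 1 := hmono (m+2) (by omega) (by omega)
      have hp1 := hp (m+1)
      have hq : 0 ≤ p (m+1) / C := div_nonneg hp1.1 hC0.le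
      rw [Finset.sum_Icc_succ_top (by omega : 1 ≤ m + 1),
          Finset.sum_Icc_succ_top (by omega : 1 ≤ m + 1)]
      have h2 : p (m+1) * v (m+1) ≤ F (m+1) - F (m+2) + (p (m+1)/C) * F 1 := by
        have hmx : p (m+1) * v (m+1) + (1 - p (m+1)/C) * F (m+2) ≤ F (m+1) := by
          rw [hrec]; exact le_max_left _ _
        nlinarith [mul_le_mul_of_nonneg_left hle hq]
      have : F (m+1+1) = F (m+2) := rfl
      linarith
  have hfinal := key u le_rfl
  rw [hFu] at hfinal
  have hsum' : (∑ t ∈ Finset.Icc 1 u, p t / C) ≤ 1 := by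
    rw [← Finset.sum_div]
    exact div_le_one_of_le₀ hsum hC0.le
  nlinarith
end

section
/- Let p ∈ [0,1], a, d ≥ 0, and B > 0 with d ≤ B and a < B < a + d. Then ((1-p)·min(B,a) + p·min(B, a+d)) / min(B, a + d·p) ≥ (4 - d/B)/4 ≥ 3/4. -/
/-!
Let `x = a + d p` be the fractional LP revenue. After rounding, the expected truncated revenue is
`(1 - p) a + p B`, and in both cases the loss against `min B x` is controlled by
`d p (1 - p) ≤ d / 4`. If `x ≤ B` the loss is `p (a + d - B)`, and `(a + d - B) B ≤ d (1 - p) x`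
with equality at `x = B`; if `x > B` the loss is `(1 - p) (B - a) < (1 - p) d p`.
-/

lemma four_mul_mul_one_sub_le_one (p : ℝ) : 4 * p * (1 - p) ≤ 1 := by
  simpa using four_mul_le_sq_add p (1 - p)

lemma revenue_bound_of_lp_le_budget {p a d B : ℝ} (hp : 0 ≤ p) (ha : 0 ≤ a) (hd : 0 ≤ d)
    (hdB : d ≤ B) (h : a + d * p ≤ B) :
    (4 * B - d) * (a + d * p) ≤ 4 * B * ((1 - p) * a + p * B) := by
  have overshoot : (a + d - B) * B ≤ d * (1 - p) * (a + d * p) := by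
    have hslack : 0 ≤ (B - a - d * p) * (B - d * (1 - p)) :=
      mul_nonneg (by linarith) (by linarith [mul_nonneg hd hp])
    linarith [show d * (1 - p) * (a + d * p) - (a + d - B) * B
      = (B - a - d * p) * (B - d * (1 - p)) by ring]
  have hx : 0 ≤ d * (a + d * p) := by positivity
  linarith [mul_le_mul_of_nonneg_left overshoot (by positivity : (0 : ℝ) ≤ 4 * p),
    mul_le_mul_of_nonneg_left (four_mul_mul_one_sub_le_one p) hx]

lemma revenue_bound_of_budget_le_lp {p a d B : ℝ} (hp : p ≤ 1) (hd : 0 ≤ d) (hB : 0 ≤ B)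
    (h : B ≤ a + d * p) :
    (4 * B - d) * B ≤ 4 * B * ((1 - p) * a + p * B) := by
  have loss : 4 * (1 - p) * (B - a) ≤ d := by
    linarith [mul_le_mul_of_nonneg_left (four_mul_mul_one_sub_le_one p) hd,
      mul_le_mul_of_nonneg_left (show B - a ≤ d * p by linarith)
        (by linarith : (0 : ℝ) ≤ 4 * (1 - p))]
  linarith [mul_le_mul_of_nonneg_left loss hB]

theorem stmt_15_general (p a d B : ℝ) (hp0 : 0 ≤ p) (hp1 : p ≤ 1)
    (hdB : d ≤ B) (haB : a < B) (hBad : B < a + d) :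
    ((1 - p) * min B a + p * min B (a + d)) / min B (a + d * p) ≥ (4 - d / B) / 4 ∧
    (4 - d / B) / 4 ≥ 3 / 4 := by
  have ha : 0 < a := by linarith
  have hB : 0 < B := ha.trans haB
  have hd : 0 ≤ d := by linarith
  have hratio : (4 - d / B) / 4 = (4 * B - d) / (4 * B) := by field_simp
  rw [min_eq_right haB.le, min_eq_left hBad.le, ge_iff_le, ge_iff_le, hratio]
  refine ⟨?_, ?_⟩
  · rw [div_le_div_iff₀ (by positivity) (lt_min hB (by positivity))]
    rcases le_total (a + d * p) B with h | h
    · rw [min_eq_right h]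
      linarith [revenue_bound_of_lp_le_budget hp0 ha.le hd hdB h]
    · rw [min_eq_left h]
      linarith [revenue_bound_of_budget_le_lp hp1 hd hB.le h]
  · rw [le_div_iff₀ (by positivity)]
    linarith

theorem stmt_15 (p a d B : ℝ) (hp0 : 0 ≤ p) (hp1 : p ≤ 1) (ha : 0 ≤ a) (hd : 0 ≤ d)
    (hB : 0 < B) (hdB : d ≤ B) (haB : a < B) (hBad : B < a + d) :
    ((1 - p) * min B a + p * min B (a + d)) / min B (a + d * p) ≥ (4 - d / B) / 4 ∧
    (4 - d / B) / 4 ≥ 3 / 4 :=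
  stmt_15_general p a d B hp0 hp1 hdB haB hBad
end
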